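/- arXiv:1709.01155 — 8 statements merged into one kernel-verified Lean document; each statement's English description precedes it below -/
import Mathlib

section
/- Let F be the free group on generators a, b, and consider G = F × Z with Z generated by t. Let H = ⟨a, b⟩ and K = ⟨ta, b⟩ be subgroups of G. Then H ∩ K equals the set of elements w(a,b) ∈ F with total a-exponent zero, which is the normal closure of b in F, and this subgroup is not finitely generated. -/
/-!
`H` is the image of `w ↦ (w, 1)` and `K` is the graph of `w ↦ t ^ |w|_a`, so `H ∩ K` consists of
the `(w, 1)` with `|w|_a = 0`. Modulo the normal closure of `b` the free group is generated by the
image of `a`, so the quotient map factors through the exponent map, whose kernel is therefore that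
normal closure. The kernel is not finitely generated: map `F₂` to the lamplighter group `ℤ ≀ ℤ`,
`a` to the shift and `b` to a lamp at `0`. On the kernel the lamp configuration is a homomorphism,
and it sends `a ^ n * b * a ^ (-n)` to the lamp at `n`, so it maps the kernel onto `ℤ^(ℤ)`, a free
abelian group of infinite rank.
-/

/-- The free group on two generators `a = of 0`, `b = of 1`. -/
abbrev F2 : Type := FreeGroup (Fin 2)

abbrev a : F2 := FreeGroup.of 0
abbrev b : F2 := FreeGroup.of 1

/-- `G = F₂ × ℤ` (with `ℤ` written multiplicatively, generated by `t`). -/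
abbrev G0 : Type := F2 × Multiplicative ℤ

abbrev t : Multiplicative ℤ := Multiplicative.ofAdd 1

/-- The total `a`-exponent homomorphism `F₂ → ℤ`. -/
noncomputable def expA : F2 →* Multiplicative ℤ :=
  FreeGroup.lift (fun i => if i = 0 then Multiplicative.ofAdd (1 : ℤ) else 1)

open Multiplicative Finsupp SemidirectProduct

theorem MonoidHom.range_inl_inf_graph {G H : Type*} [Group G] [Group H] (f : G →* H) :
    (MonoidHom.inl G H).range ⊓ f.graph = f.ker.map (MonoidHom.inl G H) := by
  ext ⟨x, y⟩
  simp only [Subgroup.mem_inf, MonoidHom.mem_range, MonoidHom.inl_apply, MonoidHom.mem_graph,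
    Subgroup.mem_map, MonoidHom.mem_ker, Prod.mk.injEq]
  constructor
  · rintro ⟨⟨x, rfl, rfl⟩, hx⟩
    exact ⟨x, hx, rfl, rfl⟩
  · rintro ⟨x, hx, rfl, rfl⟩
    exact ⟨⟨x, rfl, rfl⟩, hx⟩

theorem Subgroup.FG.of_map_injective {G G' : Type*} [Group G] [Group G'] {P : Subgroup G}
    {f : G →* G'} (hf : Function.Injective f) (h : (P.map f).FG) : P.FG :=
  (Subgroup.fg_iff_submonoid_fg P).2 <|
    Submonoid.FG.map_injective f hf ((Subgroup.fg_iff_submonoid_fg _).1 h)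

theorem Finsupp.ofAdd_mem_of_forall_ofAdd_single_one_mem {ι : Type*}
    {S : Subgroup (Multiplicative (ι →₀ ℤ))} (hS : ∀ i, ofAdd (single i 1) ∈ S) (f : ι →₀ ℤ) :
    ofAdd f ∈ S := by
  induction f using Finsupp.induction with
  | zero => exact S.one_mem
  | single_add i k f _ _ ih =>
    rw [ofAdd_add]
    refine S.mul_mem ?_ ih
    simpa [← ofAdd_zsmul] using S.zpow_mem (hS i) k

theorem Finsupp.not_groupFG_of_ofAdd_single_one_mem_range {ι N : Type*} [Infinite ι] [Group N]
    (f : N →* Multiplicative (ι →₀ ℤ)) (hf : ∀ i, ofAdd (single i 1) ∈ f.range) :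
    ¬ Group.FG N := by
  intro hN
  have hsurj : Function.Surjective f := fun x =>
    ofAdd_mem_of_forall_ofAdd_single_one_mem hf x.toAdd
  have hfg := Group.fg_of_surjective hsurj
  rw [← AddGroup.fg_iff_mul_fg, ← Module.Finite.iff_addGroup_fg] at hfg
  exact Module.not_finite_of_infinite_basis Finsupp.basisSingleOne hfg

noncomputable def lamplighterShift : Multiplicative ℤ →* MulAut (Multiplicative (ℤ →₀ ℤ)) where
  toFun n := (Finsupp.domCongr (Equiv.addRight n.toAdd)).toMultiplicative
  map_one' := by ext f k; simp [← Equiv.Perm.inv_def]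
  map_mul' m n := by ext f k; simp [Equiv.Perm.mul_def, add_comm, add_left_comm, add_assoc]

theorem lamplighterShift_ofAdd_single (n k v : ℤ) :
    lamplighterShift (ofAdd n) (ofAdd (single k v)) = ofAdd (single (k + n) v) := by
  simp [lamplighterShift]

abbrev Lamplighter : Type := Multiplicative (ℤ →₀ ℤ) ⋊[lamplighterShift] Multiplicative ℤ

noncomputable def lamplighterRep : F2 →* Lamplighter :=
  FreeGroup.lift ![inr t, inl (ofAdd (single 0 1))]

theorem rightHom_comp_lamplighterRep : rightHom.comp lamplighterRep = expA := by
  ext i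
  fin_cases i <;> simp [lamplighterRep, expA]

theorem lamplighterRep_conj_b (n : ℤ) :
    lamplighterRep (a ^ n * b * a ^ (-n)) = inl (ofAdd (single n 1)) := by
  have ha : lamplighterRep a = inr t := by simp [lamplighterRep]
  have hb : lamplighterRep b = inl (ofAdd (single 0 1)) := by simp [lamplighterRep]
  have ht : t ^ n = ofAdd n := by rw [← ofAdd_zsmul, smul_eq_mul, mul_one]
  rw [map_mul, map_mul, map_zpow, map_zpow, ha, hb, zpow_neg, ← map_zpow, ← map_inv, ← inl_aut, ht,
    lamplighterShift_ofAdd_single, zero_add]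

noncomputable def lampConfig : expA.ker →* Multiplicative (ℤ →₀ ℤ) where
  toFun w := (lamplighterRep w).left
  map_one' := by simp
  map_mul' x y := by
    have hx : (lamplighterRep x).right = 1 := by
      rw [← rightHom_eq_right, ← MonoidHom.comp_apply, rightHom_comp_lamplighterRep]
      exact x.2
    simp [hx]

theorem conj_b_mem_ker_expA (n : ℤ) : a ^ n * b * a ^ (-n) ∈ expA.ker := by
  simp [expA]

theorem ker_expA_not_fg : ¬ expA.ker.FG := by
  rw [← Group.fg_iff_subgroup_fg]
  refine Finsupp.not_groupFG_of_ofAdd_single_one_mem_range lampConfig fun n =>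
    ⟨⟨_, conj_b_mem_ker_expA n⟩, ?_⟩
  simp only [lampConfig, MonoidHom.coe_mk, OneHom.coe_mk, lamplighterRep_conj_b, left_inl]

theorem ker_expA_eq_normalClosure : expA.ker = Subgroup.normalClosure {b} := by
  set N := Subgroup.normalClosure ({b} : Set F2)
  refine le_antisymm ?_ (Subgroup.normalClosure_le_normal (by simp [expA]))
  have hfac : QuotientGroup.mk' N = (zpowersHom _ (a : F2 ⧸ N)).comp expA := by
    ext i
    fin_cases i
    · simp [expA]
    · simpa [expA] using (Subgroup.subset_normalClosure rfl : b ∈ N)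
  intro x hx
  rw [← QuotientGroup.ker_mk' N, hfac]
  exact MonoidHom.mem_ker.mpr (by rw [MonoidHom.comp_apply, MonoidHom.mem_ker.mp hx, map_one])

theorem closure_a_b : Subgroup.closure {a, b} = ⊤ := by
  rw [← FreeGroup.closure_range_of]
  congr 1
  ext
  simp [Fin.exists_fin_two, eq_comm]

theorem closure_pair_image_eq_range {M : Type*} [Group M] (φ : F2 →* M) :
    Subgroup.closure {φ a, φ b} = φ.range := by
  rw [MonoidHom.range_eq_map, ← closure_a_b, MonoidHom.map_closure, Set.image_pair]

theorem stmt0 :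
    let H : Subgroup G0 := Subgroup.closure {(a, 1), (b, 1)}
    let K : Subgroup G0 := Subgroup.closure {(a, t), (b, 1)}
    H ⊓ K = Subgroup.map (MonoidHom.inl F2 (Multiplicative ℤ)) expA.ker ∧
      expA.ker = Subgroup.normalClosure {b} ∧ ¬ (H ⊓ K).FG := by
  intro H K
  have hH : H = (MonoidHom.inl F2 (Multiplicative ℤ)).range := by
    rw [← closure_pair_image_eq_range]
    rfl
  have hK : K = expA.graph := by
    rw [MonoidHom.graph_eq_range_prod, ← closure_pair_image_eq_range]
    simp [K, expA]
  have hHK : H ⊓ K = expA.ker.map (MonoidHom.inl F2 (Multiplicative ℤ)) := by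
    rw [hH, hK, MonoidHom.range_inl_inf_graph]
  refine ⟨hHK, ker_expA_eq_normalClosure, fun hfg => ker_expA_not_fg ?_⟩
  rw [hHK] at hfg
  exact hfg.of_map_injective fun _ _ h => congrArg Prod.fst h
end

section
/- The group F₂ × Z (the direct product of a free group of rank 2 with the integers) does not satisfy Howson's property: it has two finitely generated subgroups whose intersection is not finitely generated. -/
/-!
Let `φ : F₂ → ℤ` send `a ↦ 1`, `b ↦ 0`. Its graph and `F₂ × 1` are finitely generated, being
images of `F₂`, and they meet in `ker φ × 1`. The homomorphism `F₂ → ℤ ≀ ℤ`, `a ↦ t`, `b ↦ δ₁`,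
is onto and lifts `φ`, so it maps `ker φ` onto the base group `ℤ^(ℤ)`, which is free abelian of
infinite rank. Hence `ker φ` is not finitely generated.
-/

open Multiplicative SemidirectProduct

theorem Finsupp.not_addGroupFG_int (α : Type*) [Infinite α] : ¬ AddGroup.FG (α →₀ ℤ) := by
  rw [← Module.Finite.iff_addGroup_fg, Module.finite_finsupp_self_iff]
  simp [not_subsingleton, not_finite_iff_infinite.mpr]

theorem Subgroup.FG.map {G H : Type*} [Group G] [Group H] {P : Subgroup G} (hP : P.FG)
    (f : G →* H) : (P.map f).FG := by
  classical
  obtain ⟨S, rfl⟩ := hP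
  exact ⟨S.image f, by rw [Finset.coe_image, MonoidHom.map_closure]⟩

namespace MonoidHom

variable {G H K : Type*} [Group G] [Group H] [Group K]

theorem ker_fg_of_comp_surjective {f : G →* H} (hf : Function.Surjective f) (g : H →* K)
    (h : (g.comp f).ker.FG) : g.ker.FG := by
  rw [← Subgroup.map_comap_eq_self_of_surjective hf g.ker, comap_ker]
  exact h.map f

theorem graph_inf_range_inl (f : G →* H) : f.graph ⊓ (inl G H).range = f.ker.map (inl G H) := by
  ext ⟨x, y⟩
  simp only [Subgroup.mem_inf, mem_graph, mem_range, inl_apply, Prod.mk.injEq,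
    Subgroup.mem_map, mem_ker]
  constructor
  · rintro ⟨hxy, x, rfl, rfl⟩
    exact ⟨x, hxy, rfl, rfl⟩
  · rintro ⟨x, hx, rfl, rfl⟩
    exact ⟨hx, x, rfl, rfl⟩

end MonoidHom

section Wreath

variable (G : Type*) [Group G]

attribute [local instance] Finsupp.comapSMul Finsupp.comapMulAction Finsupp.comapDistribMulAction

/-- `G` acts on the group ring `ℤ[G] = G →₀ ℤ` by left translation; the semidirect product below is
the restricted wreath product `ℤ ≀ G`. -/
noncomputable def wreathAction : G →* MulAut (Multiplicative (G →₀ ℤ)) :=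
  (MulAutMultiplicative (G →₀ ℤ)).symm.toMonoidHom.comp (DistribMulAction.toAddAut G (G →₀ ℤ))

abbrev IntWreath := Multiplicative (G →₀ ℤ) ⋊[wreathAction G] G

variable {G}

theorem wreathAction_single (g a : G) (n : ℤ) :
    wreathAction G g (ofAdd (Finsupp.single a n)) = ofAdd (Finsupp.single (g * a) n) := by
  simp [wreathAction]

theorem IntWreath.closure_insert_inl_single_range_inr_eq_top :
    Subgroup.closure (insert (inl (ofAdd (Finsupp.single 1 1))) (Set.range inr)) =
      (⊤ : Subgroup (IntWreath G)) := by
  set S : Subgroup (IntWreath G) :=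
    Subgroup.closure (insert (inl (ofAdd (Finsupp.single 1 1))) (Set.range inr))
  have inr_mem (g : G) : inr g ∈ S := Subgroup.subset_closure (.inr ⟨g, rfl⟩)
  have single_mem (g : G) : inl (ofAdd (Finsupp.single g 1)) ∈ S := by
    rw [← mul_one g, ← wreathAction_single, inl_aut]
    exact mul_mem (mul_mem (inr_mem g) (Subgroup.subset_closure (.inl rfl))) (inr_mem g⁻¹)
  have inl_mem (f : G →₀ ℤ) : inl (ofAdd f) ∈ S := by
    induction f using Finsupp.induction with
    | zero => exact one_mem S
    | single_add g n f _ _ ih =>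
      rw [ofAdd_add, map_mul, ← Finsupp.smul_single_one, ofAdd_zsmul, map_zpow]
      exact mul_mem (zpow_mem (single_mem g) n) ih
  refine eq_top_iff.mpr fun x _ => ?_
  rw [← inl_left_mul_inr_right x]
  exact mul_mem (inl_mem _) (inr_mem _)

theorem IntWreath.not_fg_ker_rightHom [Infinite G] :
    ¬ (rightHom : IntWreath G →* G).ker.FG := by
  rw [← range_inl_eq_ker_rightHom, ← Group.fg_iff_subgroup_fg]
  intro h
  have e := (MonoidHom.ofInjective (inl_injective (φ := wreathAction G))).symm
  exact Finsupp.not_addGroupFG_int G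
    (AddGroup.fg_iff_mul_fg.mpr (Group.fg_of_surjective (f := e.toMonoidHom) e.surjective))

end Wreath

noncomputable def freeGroupToIntWreath : FreeGroup (Fin 2) →* IntWreath (Multiplicative ℤ) :=
  FreeGroup.lift ![inr (ofAdd 1), inl (ofAdd (Finsupp.single 1 1))]

theorem freeGroupToIntWreath_surjective : Function.Surjective freeGroupToIntWreath := by
  rw [← MonoidHom.range_eq_top, eq_top_iff,
    ← IntWreath.closure_insert_inl_single_range_inr_eq_top, Subgroup.closure_le,
    Set.insert_subset_iff]
  refine ⟨⟨FreeGroup.of 1, by simp [freeGroupToIntWreath]⟩, ?_⟩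
  rintro _ ⟨g, rfl⟩
  refine ⟨FreeGroup.of 0 ^ toAdd g, ?_⟩
  rw [map_zpow, freeGroupToIntWreath, FreeGroup.lift_apply_of]
  simp [← map_zpow, ← ofAdd_zsmul]

/-- `F₂ × ℤ` does not satisfy Howson's property: it has two finitely generated
subgroups whose intersection is not finitely generated. -/
theorem stmt1 :
    ∃ H K : Subgroup (FreeGroup (Fin 2) × Multiplicative ℤ),
      H.FG ∧ K.FG ∧ ¬ (H ⊓ K).FG := by
  set φ := (rightHom : IntWreath (Multiplicative ℤ) →* _).comp freeGroupToIntWreath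
  set ι := MonoidHom.inl (FreeGroup (Fin 2)) (Multiplicative ℤ)
  have range_fg {G : Type} [Group G] (f : FreeGroup (Fin 2) →* G) : f.range.FG :=
    (Group.fg_iff_subgroup_fg _).mp inferInstance
  refine ⟨φ.graph, ι.range, φ.graph_eq_range_prod ▸ range_fg _, range_fg ι, ?_⟩
  rw [φ.graph_inf_range_inl]
  intro h
  have ker_fg : φ.ker.FG := by
    simpa [Subgroup.map_map] using h.map (MonoidHom.fst _ _)
  exact IntWreath.not_fg_ker_rightHom
    (MonoidHom.ker_fg_of_comp_surjective freeGroupToIntWreath_surjective _ ker_fg)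
end

section
/- Let G = Z^m × G₀ where G₀ is a group, and let H ≤ G be a subgroup such that the projection Hπ ≤ G₀ (where π : G → G₀ is the natural projection) admits a presentation with generating set Y and relations consisting only of commutators of pairs of generators. Then the restriction of π to H splits: there is a section σ : Hπ → H of π, and H decomposes as the internal direct product H = (Z^m ∩ H) × (Hπ)σ. -/
open scoped commutatorElement

/-!
Since `Hπ` has only commutator relations, a homomorphism out of it is any choice of images of
the generators such that related generators go to commuting elements. Lift each generator to an
arbitrary preimage in `H`: two lifts commute as soon as their images in `G₀` do, because their
`ℤ^m`-coordinates commute anyway. So the lifts define a homomorphic section `σ`, and a section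
splits `H` as the kernel times its image.
-/

theorem PresentedGroup.exists_lift_of_commutator_relations {Y : Type*}
    {R : Set (FreeGroup Y)} (hR : ∀ r ∈ R, ∃ y z : Y, r = ⁅FreeGroup.of y, FreeGroup.of z⁆)
    {E Q : Type*} [Group E] [Group Q] (p : E →* Q) (hp : Function.Surjective p)
    (hcomm : ∀ a b : E, Commute (p a) (p b) → Commute a b) (ψ : PresentedGroup R →* Q) :
    ∃ φ : PresentedGroup R →* E, p.comp φ = ψ := by
  choose f hf using fun y : Y => hp (ψ (.of y))
  have hrel : ∀ r ∈ R, FreeGroup.lift f r = 1 := by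
    intro r hr
    obtain ⟨y, z, rfl⟩ := hR r hr
    have hgen : ⁅(.of y : PresentedGroup R), (.of z : PresentedGroup R)⁆ = 1 :=
      (map_commutatorElement (PresentedGroup.mk R) _ _).symm.trans (PresentedGroup.one_of_mem hr)
    have hψ : Commute (p (f y)) (p (f z)) := by
      rw [hf, hf, ← commutatorElement_eq_one_iff_commute, ← map_commutatorElement, hgen, map_one]
    rw [map_commutatorElement, FreeGroup.lift_apply_of, FreeGroup.lift_apply_of,
      commutatorElement_eq_one_iff_commute]
    exact hcomm _ _ hψ
  refine ⟨PresentedGroup.toGroup hrel, PresentedGroup.ext fun y => ?_⟩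
  simp only [MonoidHom.comp_apply, PresentedGroup.toGroup.of, hf]

theorem Prod.commute_of_commute_snd {A B : Type*} [CommMonoid A] [Monoid B] {x y : A × B}
    (h : Commute x.2 y.2) : Commute x y :=
  Commute.prod (Commute.all _ _) h

theorem Subgroup.exists_section_snd_of_commutator_relations {A B : Type*}
    [CommGroup A] [Group B] (H : Subgroup (A × B)) {Y : Type*} {R : Set (FreeGroup Y)}
    (hR : ∀ r ∈ R, ∃ y z : Y, r = ⁅FreeGroup.of y, FreeGroup.of z⁆)
    (e : PresentedGroup R ≃* H.map (MonoidHom.snd A B)) :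
    ∃ σ : H.map (MonoidHom.snd A B) →* A × B, (∀ y, σ y ∈ H) ∧ ∀ y, (σ y).2 = y := by
  set π := (MonoidHom.snd A B).subgroupMap H
  have hcomm (a b : H) (h : Commute (π a) (π b)) : Commute a b := by
    rw [← Submonoid.commute_coe_coe] at h ⊢
    exact Prod.commute_of_commute_snd h
  obtain ⟨φ, hφ⟩ := PresentedGroup.exists_lift_of_commutator_relations hR π
    ((MonoidHom.snd A B).subgroupMap_surjective H) hcomm e.toMonoidHom
  refine ⟨H.subtype.comp (φ.comp e.symm.toMonoidHom), fun y => (φ _).2, fun y => ?_⟩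
  have := congrArg Subtype.val (DFunLike.congr_fun hφ (e.symm y))
  simpa [π] using this

theorem Subgroup.existsUnique_mul_section {G Q : Type*} [Group G] [Group Q] (p : G →* Q)
    (H : Subgroup G) (σ : H.map p → G) (hσH : ∀ y, σ y ∈ H) (hσ : ∀ y, p (σ y) = y)
    {h : G} (hh : h ∈ H) :
    ∃! zy : ↥(H ⊓ p.ker) × H.map p, (zy.1 : G) * σ zy.2 = h := by
  set y : H.map p := ⟨p h, h, hh, rfl⟩
  have hz : h * (σ y)⁻¹ ∈ H ⊓ p.ker :=
    ⟨H.mul_mem hh (H.inv_mem (hσH y)), by simp [hσ y, y]⟩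
  refine ⟨⟨⟨_, hz⟩, y⟩, inv_mul_cancel_right h (σ y), ?_⟩
  rintro ⟨⟨z, hzH, hzker⟩, y'⟩ hzy
  have hy' : y' = y := Subtype.ext <| by
    simpa [(p.mem_ker).mp hzker, hσ y', y] using congrArg p hzy
  subst hy'
  simp [← hzy]

/-- Let `G = ℤ^m × G₀` and `H ≤ G` be a subgroup such that the projection `Hπ`
admits a presentation all of whose relations are commutators of pairs of generators
(i.e. `Hπ` is a partially commutative group).  Then `π` restricted to `H` splits:
there is a section `σ : Hπ → H` of `π`, and `H` is the internal direct product
`(ℤ^m ∩ H) × (Hπ)σ` (every element of `H` factors uniquely). -/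
theorem stmt4 {m : ℕ} {G₀ : Type*} [Group G₀]
    (H : Subgroup (Multiplicative (Fin m → ℤ) × G₀))
    (hpc : ∃ (Y : Type) (R : Set (FreeGroup Y)),
      (∀ r ∈ R, ∃ y z : Y, r = ⁅FreeGroup.of y, FreeGroup.of z⁆) ∧
      Nonempty (PresentedGroup R ≃*
        (H.map (MonoidHom.snd (Multiplicative (Fin m → ℤ)) G₀)))) :
    ∃ σ : (H.map (MonoidHom.snd (Multiplicative (Fin m → ℤ)) G₀)) →*
        (Multiplicative (Fin m → ℤ) × G₀),
      (∀ y, σ y ∈ H) ∧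
      (∀ y, (σ y).2 = (y : G₀)) ∧
      (∀ h ∈ H, ∃! zy : ↥(H ⊓ (MonoidHom.snd (Multiplicative (Fin m → ℤ)) G₀).ker) ×
          ↥(H.map (MonoidHom.snd (Multiplicative (Fin m → ℤ)) G₀)),
        ((zy.1 : Multiplicative (Fin m → ℤ) × G₀)) * σ zy.2 = h) := by
  obtain ⟨Y, R, hR, ⟨e⟩⟩ := hpc
  obtain ⟨σ, hσH, hσ⟩ := H.exists_section_snd_of_commutator_relations hR e
  exact ⟨σ, hσH, hσ, fun h hh => H.existsUnique_mul_section _ σ hσH hσ hh⟩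
end

section
/- Let G = Z^m × G₀ with projection π : G → G₀, and let H₁, H₂ ≤ G be subgroups. Then (H₁ ∩ H₂)π is a normal subgroup of H₁π ∩ H₂π. -/
/-!
Conjugating by `p` and by `q` with `π p = π q` has the same effect, because `p` and `q` differ by
an element of the central kernel of `π`. So if `x = π k` with `k ∈ H₁ ∩ H₂` and `g = π h₁ = π h₂`
with `hᵢ ∈ Hᵢ`, then `h₁ k h₁⁻¹ = h₂ k h₂⁻¹` lies in `H₁ ∩ H₂` and maps to `g x g⁻¹`.
-/

namespace MonoidHom

variable {G G' : Type*} [Group G] [Group G']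

theorem conj_eq_conj_of_map_eq {f : G →* G'} (hf : f.ker ≤ Subgroup.center G) {p q : G}
    (hpq : f p = f q) (k : G) : p * k * p⁻¹ = q * k * q⁻¹ := by
  have hz : q⁻¹ * p ∈ Subgroup.center G := hf <| by simp [hpq]
  have hp : p = q * (q⁻¹ * p) := by group
  rw [hp, mul_inv_rev, ← mul_assoc, mul_assoc q, ← Subgroup.mem_center_iff.mp hz k]
  group

theorem normal_map_inf_subgroupOf_inf_map {f : G →* G'} (hf : f.ker ≤ Subgroup.center G)
    (H₁ H₂ : Subgroup G) :
    (((H₁ ⊓ H₂).map f).subgroupOf (H₁.map f ⊓ H₂.map f)).Normal := by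
  constructor
  rintro x ⟨k, ⟨hk₁, hk₂⟩, hkx⟩ ⟨g, ⟨h₁, hh₁, hg₁⟩, ⟨h₂, hh₂, hg₂⟩⟩
  have hconj : h₁ * k * h₁⁻¹ = h₂ * k * h₂⁻¹ := conj_eq_conj_of_map_eq hf (hg₁.trans hg₂.symm) k
  refine ⟨h₁ * k * h₁⁻¹, ⟨?_, ?_⟩, ?_⟩
  · exact H₁.mul_mem (H₁.mul_mem hh₁ hk₁) (H₁.inv_mem hh₁)
  · rw [hconj]
    exact H₂.mul_mem (H₂.mul_mem hh₂ hk₂) (H₂.inv_mem hh₂)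
  · simp [hg₁, hkx]

theorem ker_snd_le_center (A : Type*) [CommGroup A] :
    (snd A G').ker ≤ Subgroup.center (A × G') := by
  rintro ⟨a, b⟩ (hb : b = 1)
  subst hb
  refine Subgroup.mem_center_iff.mpr fun ⟨c, d⟩ => ?_
  simp [mul_comm c a]

end MonoidHom

/-- For `G = ℤ^m × G₀` with projection `π` and subgroups `H₁, H₂ ≤ G`,
the image `(H₁ ∩ H₂)π` is a normal subgroup of `H₁π ∩ H₂π`. -/
theorem stmt6 {m : ℕ} {G₀ : Type*} [Group G₀]
    (H₁ H₂ : Subgroup (Multiplicative (Fin m → ℤ) × G₀)) :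
    (((H₁ ⊓ H₂).map (MonoidHom.snd (Multiplicative (Fin m → ℤ)) G₀)).subgroupOf
      (H₁.map (MonoidHom.snd (Multiplicative (Fin m → ℤ)) G₀) ⊓
        H₂.map (MonoidHom.snd (Multiplicative (Fin m → ℤ)) G₀))).Normal :=
  MonoidHom.normal_map_inf_subgroupOf_inf_map (MonoidHom.ker_snd_le_center _) H₁ H₂
end

section
/- Let G = Z^m × G₀ with projection π : G → G₀, and let H₁, H₂ ≤ G be subgroups. Then the commutator subgroup [H₁π ∩ H₂π, H₁π ∩ H₂π] is contained in (H₁ ∩ H₂)π. -/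
open scoped commutatorElement

namespace Subgroup

variable {A B : Type*} [CommGroup A] [Group B]

/-- As `A` is abelian, `⁅(a, g), (b, h)⁆ = (1, ⁅g, h⁆)` does not depend on the lifts `a`, `b`:
so lifts of `g`, `h` to `H₁` and to `H₂` produce the same commutator, which lies in `H₁ ⊓ H₂`. -/
theorem one_commutatorElement_mem {H : Subgroup (A × B)} {a b : A} {g h : B}
    (hg : (a, g) ∈ H) (hh : (b, h) ∈ H) : ((1 : A), ⁅g, h⁆) ∈ H := by
  have hab : ⁅a, b⁆ = 1 := commutatorElement_eq_one_iff_commute.mpr (Commute.all a b)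
  have hcomm : ⁅((a, g) : A × B), (b, h)⁆ = (⁅a, b⁆, ⁅g, h⁆) := rfl
  rw [← hab, ← hcomm]
  exact H.mul_mem (H.mul_mem (H.mul_mem hg hh) (H.inv_mem hg)) (H.inv_mem hh)

theorem commutator_inf_map_snd_le (H₁ H₂ : Subgroup (A × B)) :
    ⁅H₁.map (MonoidHom.snd A B) ⊓ H₂.map (MonoidHom.snd A B),
      H₁.map (MonoidHom.snd A B) ⊓ H₂.map (MonoidHom.snd A B)⁆ ≤
      (H₁ ⊓ H₂).map (MonoidHom.snd A B) := by
  rw [commutator_le]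
  rintro _ ⟨⟨⟨_, _⟩, hg₁, rfl⟩, ⟨⟨_, _⟩, hg₂, rfl⟩⟩ _ ⟨⟨⟨_, _⟩, hh₁, rfl⟩, ⟨⟨_, _⟩, hh₂, rfl⟩⟩
  exact ⟨(1, _), ⟨one_commutatorElement_mem hg₁ hh₁, one_commutatorElement_mem hg₂ hh₂⟩, rfl⟩

end Subgroup

/-- For `G = ℤ^m × G₀` with projection `π` and subgroups `H₁, H₂ ≤ G`,
the commutator subgroup `[H₁π ∩ H₂π, H₁π ∩ H₂π]` is contained in `(H₁ ∩ H₂)π`. -/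
theorem stmt7 {m : ℕ} {G₀ : Type*} [Group G₀]
    (H₁ H₂ : Subgroup (Multiplicative (Fin m → ℤ) × G₀)) :
    ⁅H₁.map (MonoidHom.snd (Multiplicative (Fin m → ℤ)) G₀) ⊓
        H₂.map (MonoidHom.snd (Multiplicative (Fin m → ℤ)) G₀),
      H₁.map (MonoidHom.snd (Multiplicative (Fin m → ℤ)) G₀) ⊓
        H₂.map (MonoidHom.snd (Multiplicative (Fin m → ℤ)) G₀)⁆ ≤
      (H₁ ⊓ H₂).map (MonoidHom.snd (Multiplicative (Fin m → ℤ)) G₀) :=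
  Subgroup.commutator_inf_map_snd_le H₁ H₂
end

section
/- The center of a right-angled Artin group G(A) on a finite graph A is the free abelian subgroup generated by the set of central vertices of A, i.e., the vertices adjacent to every other vertex of A. -/
open scoped commutatorElement

/-- The defining relations of the right-angled Artin group of a simple graph. -/
def raagRels {V : Type} (A : SimpleGraph V) : Set (FreeGroup V) :=
  {r | ∃ u v : V, A.Adj u v ∧ r = ⁅FreeGroup.of u, FreeGroup.of v⁆}

/-- The right-angled Artin group of a simple graph. -/
def Raag {V : Type} (A : SimpleGraph V) : Type := PresentedGroup (raagRels A)

instance {V : Type} (A : SimpleGraph V) : Group (Raag A) :=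
  inferInstanceAs (Group (PresentedGroup (raagRels A)))

def Raag.of {V : Type} {A : SimpleGraph V} (v : V) : Raag A := PresentedGroup.of v

/-- A vertex is central if it is adjacent to every other vertex. -/
def IsCentralVertex {V : Type} (A : SimpleGraph V) (v : V) : Prop :=
  ∀ w : V, w ≠ v → A.Adj v w

/-!
The proof is by induction on the number of vertices. If some vertex `v` is not central, `G(A)` is
the HNN extension of `G(A - v)` whose stable letter `v` centralizes the subgroup generated by the
link of `v`, a proper subgroup. By the normal form for HNN extensions, a central element then lies
in `G(A - v)`, is central there, and commutes with `v`, so by Britton's lemma it also lies in the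
link subgroup. By induction it is a word in the central vertices of `A - v`; retracting onto the
link shows that it is even a word in the central vertices of `A - v` adjacent to `v`, and these are
central in `A`. The exponent sums at the central vertices show that these generate a free abelian
group.
-/

namespace HNNExtension

open NormalWord

variable {G : Type*} [Group G] {A B : Subgroup G} {φ : A ≃* B}

theorem ReducedWord.exists_prod_eq (g : HNNExtension G A B φ) :
    ∃ w : ReducedWord G A B, w.prod φ = g := by
  obtain ⟨d⟩ := TransversalPair.nonempty G A B
  exact ⟨(g • empty : NormalWord d).toReducedWord, by simp⟩

theorem ReducedWord.exists_prod_mul_of_eq (w : ReducedWord G A B) (hw : w.toList ≠ []) (x : G) :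
    ∃ w' : ReducedWord G A B, w'.head = w.head ∧ w'.prod φ = w.prod φ * of x := by
  obtain ⟨L, a, hL⟩ := (List.eq_nil_or_concat' w.toList).resolve_left hw
  have chain := w.chain
  rw [hL, List.isChain_append] at chain
  refine ⟨⟨w.head, L ++ [(a.1, a.2 * x)], List.isChain_append.2
    ⟨chain.1, List.isChain_singleton _, fun b hb c hc => ?_⟩⟩, rfl, ?_⟩
  · obtain rfl : c = (a.1, a.2 * x) := by simpa using hc.symm
    exact chain.2.2 b hb a rfl
  · simp [ReducedWord.prod, hL, mul_assoc]

/-- If the reduced word of a central `g` contained `t`, comparing the reduced words of `of x * g`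
and `g * of x` would put every element of `G` into `A` or `B`. -/
theorem mem_range_of_mem_center (hA : A ≠ ⊤) (hB : B ≠ ⊤) {g : HNNExtension G A B φ}
    (hg : g ∈ Subgroup.center _) : g ∈ (of : G →* HNNExtension G A B φ).range := by
  obtain ⟨w, rfl⟩ := ReducedWord.exists_prod_eq (φ := φ) g
  by_cases hw : w.toList = []
  · exact ⟨w.head, by simp [ReducedWord.prod, hw]⟩
  set u := (w.toList.head hw).1
  have hconj : ∀ x : G, w.head⁻¹ * x⁻¹ * w.head ∈ toSubgroup A B (-u) := fun x => by
    obtain ⟨w', hhead, hprod⟩ := ReducedWord.exists_prod_mul_of_eq w hw x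
    have hxw : (⟨x * w.head, w.toList, w.chain⟩ : ReducedWord G A B).prod φ = w'.prod φ := by
      rw [hprod, ← Subgroup.mem_center_iff.1 hg]
      simp [ReducedWord.prod, mul_assoc]
    simpa [hhead, mul_assoc] using
      (ReducedWord.map_fst_eq_and_of_prod_eq φ hxw).2 u (by simp [u, List.head?_eq_some_head hw])
  have htop : toSubgroup A B (-u) = ⊤ := (Subgroup.eq_top_iff' _).2 fun y => by
    simpa [mul_assoc] using hconj (w.head * y⁻¹ * w.head⁻¹)
  exfalso
  unfold toSubgroup at htop
  split_ifs at htop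
  exacts [hA htop, hB htop]

theorem commute_t_of_mem {K : Subgroup G} {x : G} (hx : x ∈ K) :
    Commute t (of x : HNNExtension G K K (MulEquiv.refl K)) :=
  t_mul_of (φ := MulEquiv.refl K) ⟨x, hx⟩

theorem mem_of_t_mul_of_mul_inv_mem_range {h : G}
    (hh : t * of h * t⁻¹ ∈ (of : G →* HNNExtension G A B φ).range) : h ∈ A := by
  by_contra hA
  let w : ReducedWord G A B := ⟨1, [(1, h), (-1, 1)], by simp [List.isChain_cons_cons, hA]⟩
  have := ReducedWord.toList_eq_nil_of_mem_of_range (φ := φ) w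
    (by simpa [w, ReducedWord.prod, mul_assoc] using hh)
  simp [w] at this

end HNNExtension

namespace Raag

open Subgroup

variable {V : Type} {A : SimpleGraph V}

theorem commute_of_adj {u w : V} (h : A.Adj u w) : Commute (of u : Raag A) (of w) := by
  rw [← commutatorElement_eq_one_iff_commute]
  have := PresentedGroup.one_of_mem (rels := raagRels A) ⟨u, w, h, rfl⟩
  rwa [map_commutatorElement] at this

def lift {G : Type*} [Group G] (f : V → G) (hf : ∀ u w, A.Adj u w → Commute (f u) (f w)) :
    Raag A →* G :=
  PresentedGroup.toGroup (f := f) <| by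
    rintro _ ⟨u, w, h, rfl⟩
    simpa [map_commutatorElement, commutatorElement_eq_one_iff_commute] using hf u w h

@[simp]
theorem lift_of {G : Type*} [Group G] (f : V → G)
    (hf : ∀ u w, A.Adj u w → Commute (f u) (f w)) (v : V) : lift f hf (of v : Raag A) = f v :=
  PresentedGroup.toGroup.of _

theorem hom_ext {G : Type*} [Group G] {φ ψ : Raag A →* G} (h : ∀ v, φ (of v) = ψ (of v)) :
    φ = ψ :=
  PresentedGroup.ext h

theorem closure_range_of : closure (Set.range (of : V → Raag A)) = ⊤ :=
  PresentedGroup.closure_range_of _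

theorem of_mem_center {v : V} (hv : IsCentralVertex A v) : (of v : Raag A) ∈ center (Raag A) := by
  suffices ⊤ ≤ centralizer {(of v : Raag A)} from
    mem_center_iff.2 fun g => mem_centralizer_singleton_iff.1 (this trivial)
  rw [← closure_range_of, closure_le]
  rintro _ ⟨w, rfl⟩
  rcases eq_or_ne w v with rfl | hwv
  · exact mem_centralizer_singleton_iff.2 rfl
  · exact mem_centralizer_singleton_iff.2 (commute_of_adj (hv w hwv)).symm.eq

theorem closure_le_center : closure (of '' {v | IsCentralVertex A v}) ≤ center (Raag A) :=
  (closure_le _).2 <| Set.image_subset_iff.2 fun _ => of_mem_center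

section ExponentSum

open scoped Classical

noncomputable def exponentSum (w : V) : Raag A →* Multiplicative ℤ :=
  lift (fun u => Multiplicative.ofAdd (if u = w then 1 else 0)) fun _ _ _ => Commute.all _ _

@[simp]
theorem exponentSum_of_self (w : V) : exponentSum w (of w : Raag A) = Multiplicative.ofAdd 1 := by
  simp [exponentSum]

theorem exponentSum_of_of_ne {u w : V} (h : u ≠ w) : exponentSum w (of u : Raag A) = 1 := by
  simp [exponentSum, h]

end ExponentSum

section Projection

open scoped Classical

noncomputable def proj (S : Set V) : Raag A →* Raag A :=
  lift (fun u => if u ∈ S then of u else 1) fun u w h => by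
    split_ifs
    exacts [commute_of_adj h, Commute.one_right _, Commute.one_left _, Commute.one_left _]

theorem proj_of_mem {S : Set V} {u : V} (hu : u ∈ S) : proj S (of u : Raag A) = of u := by
  simp [proj, hu]

theorem proj_of_notMem {S : Set V} {u : V} (hu : u ∉ S) : proj S (of u : Raag A) = 1 := by
  simp [proj, hu]

theorem proj_eq_self {S : Set V} {x : Raag A} (hx : x ∈ closure (of '' S)) : proj S x = x := by
  have : closure (of '' S : Set (Raag A)) ≤ (proj S).eqLocus (MonoidHom.id _) :=
    (closure_le _).2 <| by
      rintro _ ⟨u, hu, rfl⟩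
      exact proj_of_mem hu
  exact this hx

theorem proj_mem_closure {S T : Set V} {x : Raag A} (hx : x ∈ closure (of '' T)) :
    proj S x ∈ closure (of '' (S ∩ T)) := by
  have : closure (of '' T : Set (Raag A)) ≤ (closure (of '' (S ∩ T))).comap (proj S) :=
    (closure_le _).2 <| by
      rintro _ ⟨u, hu, rfl⟩
      by_cases huS : u ∈ S
      · rw [SetLike.mem_coe, mem_comap, proj_of_mem huS]
        exact subset_closure ⟨u, ⟨huS, hu⟩, rfl⟩
      · rw [SetLike.mem_coe, mem_comap, proj_of_notMem huS]
        exact one_mem _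
  exact this hx

end Projection

theorem closure_image_of_inter (S T : Set V) :
    closure (of '' (S ∩ T)) = closure (of '' S) ⊓ closure (of '' T : Set (Raag A)) := by
  refine le_antisymm (le_inf (closure_mono (Set.image_mono Set.inter_subset_left))
    (closure_mono (Set.image_mono Set.inter_subset_right))) ?_
  rintro x ⟨hS, hT⟩
  simpa [proj_eq_self hS] using proj_mem_closure (S := S) hT

variable (A) in
def inclusion (s : Set V) : Raag (A.induce s) →* Raag A :=
  lift (fun w => of w.1) fun _ _ h => commute_of_adj h

@[simp]
theorem inclusion_of (s : Set V) (w : s) : inclusion A s (of w) = of w.1 :=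
  lift_of _ _ _

variable (A) in
def link (v : V) : Subgroup (Raag (A.induce {v}ᶜ)) :=
  closure (of '' {w | A.Adj v w})

theorem link_ne_top {v : V} (hv : ¬ IsCentralVertex A v) : link A v ≠ ⊤ := by
  obtain ⟨w, hwv, hvw⟩ : ∃ w, w ≠ v ∧ ¬ A.Adj v w := by simpa [IsCentralVertex] using hv
  have hle : link A v ≤ (exponentSum (⟨w, hwv⟩ : ({v}ᶜ : Set V))).ker :=
    (closure_le _).2 <| by
      rintro _ ⟨u, hu, rfl⟩
      exact exponentSum_of_of_ne (by rintro rfl; exact hvw hu)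
  intro htop
  have := hle (htop ▸ mem_top (of (⟨w, hwv⟩ : ({v}ᶜ : Set V))))
  rw [MonoidHom.mem_ker, exponentSum_of_self] at this
  simp at this

theorem of_mem_link {v : V} {w : ({v}ᶜ : Set V)} (h : A.Adj v w) : of w ∈ link A v :=
  subset_closure ⟨w, h, rfl⟩

section HNN

variable (A) (v : V)

open scoped Classical in
noncomputable def toHNNExtension :
    Raag A →* HNNExtension (Raag (A.induce {v}ᶜ)) (link A v) (link A v) (.refl _) :=
  lift (fun w => if h : w = v then .t else .of (of ⟨w, h⟩)) fun u w h => by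
    by_cases hu : u = v <;> by_cases hw : w = v
    · exact absurd (hu.trans hw.symm) h.ne
    · subst hu
      simpa [hw] using HNNExtension.commute_t_of_mem (of_mem_link (w := ⟨w, hw⟩) h)
    · subst hw
      simpa [hu] using (HNNExtension.commute_t_of_mem (of_mem_link (w := ⟨u, hu⟩) h.symm)).symm
    · have huw : (A.induce {v}ᶜ).Adj ⟨u, hu⟩ ⟨w, hw⟩ := h
      simpa [hu, hw] using (commute_of_adj huw).map HNNExtension.of

@[simp]
theorem toHNNExtension_of_self : toHNNExtension A v (of v) = .t := by
  simp [toHNNExtension]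

@[simp]
theorem toHNNExtension_of_of_ne {w : V} (hw : w ≠ v) :
    toHNNExtension A v (of w) = .of (of ⟨w, hw⟩) := by
  simp [toHNNExtension, hw]

noncomputable def ofHNNExtension :
    HNNExtension (Raag (A.induce {v}ᶜ)) (link A v) (link A v) (.refl _) →* Raag A :=
  HNNExtension.lift (inclusion A {v}ᶜ) (of v) fun x => by
    have : link A v ≤ (centralizer {of v}).comap (inclusion A {v}ᶜ) :=
      (closure_le _).2 <| by
        rintro _ ⟨w, hw, rfl⟩
        simpa [mem_centralizer_singleton_iff] using (commute_of_adj hw).symm.eq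
    exact (mem_centralizer_singleton_iff.1 (this x.2)).symm

@[simp]
theorem ofHNNExtension_t : ofHNNExtension A v .t = of v :=
  HNNExtension.lift_t _ _ _

@[simp]
theorem ofHNNExtension_of (x : Raag (A.induce {v}ᶜ)) :
    ofHNNExtension A v (.of x) = inclusion A {v}ᶜ x :=
  HNNExtension.lift_of _ _ _ _

noncomputable def equivHNNExtension :
    Raag A ≃* HNNExtension (Raag (A.induce {v}ᶜ)) (link A v) (link A v) (.refl _) :=
  MonoidHom.toMulEquiv (toHNNExtension A v) (ofHNNExtension A v)
    (hom_ext fun w => by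
      by_cases hw : w = v
      · subst hw; simp
      · simp [hw])
    (HNNExtension.hom_ext (hom_ext fun w => by simpa using toHNNExtension_of_of_ne A v w.2)
      (by simp))

end HNN

theorem exists_inclusion_eq_of_mem_center {v : V} (hv : ¬ IsCentralVertex A v) {g : Raag A}
    (hg : g ∈ center (Raag A)) :
    ∃ h ∈ center (Raag (A.induce {v}ᶜ)) ⊓ link A v, inclusion A {v}ᶜ h = g := by
  set e := equivHNNExtension A v
  have heg : e g ∈ center _ := MulEquivClass.apply_mem_center e hg
  obtain ⟨h, hh⟩ := HNNExtension.mem_range_of_mem_center (link_ne_top hv) (link_ne_top hv) heg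
  refine ⟨h, ⟨mem_center_iff.2 fun y => ?_,
    HNNExtension.mem_of_t_mul_of_mul_inv_mem_range (φ := .refl (link A v)) ⟨h, ?_⟩⟩, ?_⟩
  · apply HNNExtension.of_injective (φ := .refl (link A v))
    simpa [hh] using mem_center_iff.1 heg (.of y)
  · rw [hh, mem_center_iff.1 heg, mul_inv_cancel_right]
  · rw [← ofHNNExtension_of, hh]
    exact e.symm_apply_apply g

theorem isCentralVertex_of_induce {v : V} {w : ({v}ᶜ : Set V)}
    (hw : IsCentralVertex (A.induce {v}ᶜ) w) (hvw : A.Adj v w) : IsCentralVertex A w := by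
  intro u hu
  by_cases huv : u = v
  · exact huv ▸ hvw.symm
  · exact hw ⟨u, huv⟩ (Subtype.coe_ne_coe.1 hu)

theorem inclusion_mem_closure_of_mem_link {v : V} {h : Raag (A.induce {v}ᶜ)}
    (hC : h ∈ closure (of '' {w | IsCentralVertex (A.induce {v}ᶜ) w})) (hL : h ∈ link A v) :
    inclusion A {v}ᶜ h ∈ closure (of '' {w | IsCentralVertex A w}) := by
  have h' : h ∈ closure (of '' ({w : ({v}ᶜ : Set V) | A.Adj v w} ∩
      {w | IsCentralVertex (A.induce {v}ᶜ) w})) := by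
    rw [closure_image_of_inter]
    exact ⟨hL, hC⟩
  have := mem_map_of_mem (inclusion A {v}ᶜ) h'
  rw [MonoidHom.map_closure, ← Set.image_comp] at this
  refine closure_mono ?_ this
  rintro _ ⟨w, ⟨hvw, hw⟩, rfl⟩
  exact ⟨w, isCentralVertex_of_induce hw hvw, by simp⟩

theorem center_le_closure [Finite V] (A : SimpleGraph V) :
    center (Raag A) ≤ closure (of '' {v | IsCentralVertex A v}) := by
  induction hn : Nat.card V using Nat.strong_induction_on generalizing V with
  | _ n ih =>
  by_cases hA : ∀ v, IsCentralVertex A v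
  · simp [hA, closure_range_of]
  obtain ⟨v, hv⟩ := not_forall.1 hA
  intro g hg
  obtain ⟨h, ⟨hC, hL⟩, rfl⟩ := exists_inclusion_eq_of_mem_center hv hg
  have hcard : Nat.card ({v}ᶜ : Set V) < n := hn ▸ Finite.card_subtype_lt (x := v) (by simp)
  exact inclusion_mem_closure_of_mem_link (ih _ hcard (A.induce {v}ᶜ) rfl hC) hL

section FreeAbelian

variable [Fintype V] (A)

open scoped Classical IsMulCommutative

noncomputable def centralPow :
    Multiplicative ({v // IsCentralVertex A v} → ℤ) →* center (Raag A) where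
  toFun F := ∏ c, ⟨of c.1, of_mem_center c.2⟩ ^ F.toAdd c
  map_one' := by simp
  map_mul' F G := by simp [zpow_add, Finset.prod_mul_distrib]

theorem exponentSum_centralPow (F : Multiplicative ({v // IsCentralVertex A v} → ℤ))
    (c : {v // IsCentralVertex A v}) :
    exponentSum c.1 (centralPow A F : Raag A) = .ofAdd (F.toAdd c) := by
  change ((exponentSum c.1).comp (center (Raag A)).subtype) (∏ c', _) = _
  rw [map_prod, Finset.prod_eq_single c]
  · simp [← ofAdd_zsmul]
  · intro c' _ hc'
    simp [exponentSum_of_of_ne (Subtype.coe_ne_coe.2 hc')]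
  · simp

theorem centralPow_single (c : {v // IsCentralVertex A v}) :
    centralPow A (.ofAdd (Pi.single c 1)) = ⟨of c.1, of_mem_center c.2⟩ := by
  rw [centralPow, MonoidHom.coe_mk, OneHom.coe_mk, Finset.prod_eq_single c]
  · simp
  · intro c' _ hc'
    simp [hc']
  · simp

theorem centralPow_injective : Function.Injective (centralPow A) := fun F G h => by
  apply Multiplicative.toAdd.injective
  funext c
  simpa [exponentSum_centralPow] using congrArg (exponentSum c.1 ∘ Subtype.val) h

theorem centralPow_surjective : Function.Surjective (centralPow A) := by
  rintro ⟨g, hg⟩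
  have : closure (of '' {v | IsCentralVertex A v}) ≤
      ((center _).subtype.comp (centralPow A)).range :=
    (closure_le _).2 <| by
      rintro _ ⟨c, hc, rfl⟩
      exact ⟨.ofAdd (Pi.single ⟨c, hc⟩ 1), by simp [centralPow_single]⟩
  obtain ⟨F, hF⟩ := this (center_le_closure A hg)
  exact ⟨F, Subtype.ext hF⟩

end FreeAbelian

end Raag

/-- The center of a RAAG on a finite graph is the subgroup generated by the central
vertices, and it is free abelian of rank the number of central vertices. -/
theorem stmt13 {V : Type} [Fintype V] (A : SimpleGraph V) :
    Subgroup.center (Raag A) =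
        Subgroup.closure ((fun v : V => (Raag.of v : Raag A)) ''
          {v : V | IsCentralVertex A v}) ∧
      Nonempty ((Subgroup.center (Raag A)) ≃*
        Multiplicative ({v : V // IsCentralVertex A v} → ℤ)) :=
  ⟨le_antisymm (Raag.center_le_closure A) Raag.closure_le_center,
    ⟨(MulEquiv.ofBijective _
      ⟨Raag.centralPow_injective A, Raag.centralPow_surjective A⟩).symm⟩⟩
end

section
/- Every nonempty finite simple graph with no induced path on 4 vertices and no induced cycle on 4 vertices is either disconnected or contains a central vertex (a vertex adjacent to all other vertices). -/
/-- `B` occurs as an induced subgraph of `A`. -/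
def HasInduced {W V : Type} (B : SimpleGraph W) (A : SimpleGraph V) : Prop :=
  ∃ f : W → V, Function.Injective f ∧ ∀ i j : W, A.Adj (f i) (f j) ↔ B.Adj i j

/-!
Let `v` be a vertex of maximum degree in a connected graph and suppose `v` is not central.
Then some `w` is at distance two from `v`, via a neighbour `u` of `v`. Since `u` is adjacent
to `v` and `w` but has no more neighbours than `v`, some neighbour `x ≠ u` of `v` is not
adjacent to `u`. Now `v x w u` is an induced `C₄` if `x` is adjacent to `w`, and `x v u w`
is an induced `P₄` otherwise.
-/

namespace SimpleGraph

variable {V : Type} {A : SimpleGraph V}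

theorem hasInduced_pathGraph_four {a b c d : V} (hab : A.Adj a b) (hbc : A.Adj b c)
    (hcd : A.Adj c d) (hac : ¬ A.Adj a c) (hbd : ¬ A.Adj b d) (had : ¬ A.Adj a d) :
    HasInduced (pathGraph 4) A := by
  have hac' : a ≠ c := by rintro rfl; exact had hcd
  have hbd' : b ≠ d := by rintro rfl; exact had hab
  have had' : a ≠ d := by rintro rfl; exact hac hcd.symm
  refine ⟨![a, b, c, d], ?_, fun i j => ?_⟩
  · intro i j hij
    fin_cases i <;> fin_cases j <;> simp_all [hab.ne, hbc.ne, hcd.ne, eq_comm]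
  · fin_cases i <;> fin_cases j <;>
      simp [pathGraph_adj, hab, hbc, hcd, hab.symm, hbc.symm, hcd.symm, hac, hbd, had,
        mt A.adj_symm hac, mt A.adj_symm hbd, mt A.adj_symm had]

theorem hasInduced_cycleGraph_four {a b c d : V} (hab : A.Adj a b) (hbc : A.Adj b c)
    (hcd : A.Adj c d) (hda : A.Adj d a) (hac : ¬ A.Adj a c) (hbd : ¬ A.Adj b d)
    (hac' : a ≠ c) (hbd' : b ≠ d) :
    HasInduced (cycleGraph 4) A := by
  refine ⟨![a, b, c, d], ?_, fun i j => ?_⟩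
  · intro i j hij
    fin_cases i <;> fin_cases j <;> simp_all [hab.ne, hbc.ne, hcd.ne, hda.ne, eq_comm]
  · fin_cases i <;> fin_cases j <;>
      simp [cycleGraph_adj, hab, hbc, hcd, hda, hab.symm, hbc.symm, hcd.symm, hda.symm, hac,
        hbd, mt A.adj_symm hac, mt A.adj_symm hbd] <;> decide

theorem Connected.exists_adj_adj_not_adj (hA : A.Connected) {v w₀ : V} (hw₀ : w₀ ≠ v)
    (hvw₀ : ¬ A.Adj v w₀) : ∃ u w, A.Adj v u ∧ A.Adj u w ∧ w ≠ v ∧ ¬ A.Adj v w := by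
  obtain ⟨⟨⟨u, w⟩, huw⟩, -, hu, hw⟩ :=
    (hA.preconnected v w₀).some.exists_boundary_dart {x | x = v ∨ A.Adj v x} (Or.inl rfl)
      (by rintro (h | h) <;> contradiction)
  simp only [Set.mem_ofPred_eq, not_or] at hu hw
  obtain rfl | hvu := hu
  · exact absurd huw hw.2
  · exact ⟨u, w, hvu, huw, hw.1, hw.2⟩

theorem exists_adj_ne_not_adj_of_degree_le [Fintype V] [DecidableRel A.Adj] {v u w : V}
    (hdeg : A.degree u ≤ A.degree v) (hvu : A.Adj v u) (huw : A.Adj u w) (hwv : w ≠ v)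
    (hvw : ¬ A.Adj v w) : ∃ x, A.Adj v x ∧ x ≠ u ∧ ¬ A.Adj u x := by
  classical
  by_contra! hadj
  have hsub : (A.neighborFinset v).erase u ⊆ ((A.neighborFinset u).erase v).erase w := by
    intro x hx
    simp only [Finset.mem_erase, mem_neighborFinset] at hx ⊢
    exact ⟨fun hxw => hvw (hxw ▸ hx.2), fun hxv => A.irrefl (hxv ▸ hx.2), hadj x hx.2 hx.1⟩
  have hv := Finset.card_erase_add_one (mem_neighborFinset A v u |>.mpr hvu)
  have hu := Finset.card_erase_add_one (mem_neighborFinset A u v |>.mpr hvu.symm)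
  have huv := Finset.card_erase_add_one
    (Finset.mem_erase.mpr ⟨hwv, mem_neighborFinset A u w |>.mpr huw⟩)
  rw [card_neighborFinset_eq_degree] at hv hu
  have := Finset.card_le_card hsub
  omega

end SimpleGraph

open SimpleGraph in
theorem stmt16_general {V : Type} [Fintype V] (A : SimpleGraph V)
    (hP4 : ¬ HasInduced (SimpleGraph.pathGraph 4) A)
    (hC4 : ¬ HasInduced (SimpleGraph.cycleGraph 4) A) :
    ¬ A.Connected ∨ ∃ v : V, ∀ w : V, w ≠ v → A.Adj v w := by
  classical
  rw [or_iff_not_imp_left, not_not]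
  intro hA
  have := hA.nonempty
  obtain ⟨v, hv⟩ := Finite.exists_max (fun x => A.degree x)
  by_contra! hcentral
  obtain ⟨w₀, hw₀, hvw₀⟩ := hcentral v
  obtain ⟨u, w, hvu, huw, hwv, hvw⟩ := hA.exists_adj_adj_not_adj hw₀ hvw₀
  obtain ⟨x, hvx, hxu, hux⟩ := exists_adj_ne_not_adj_of_degree_le (hv u) hvu huw hwv hvw
  by_cases hxw : A.Adj x w
  · exact hC4 (hasInduced_cycleGraph_four hvx hxw huw.symm hvu.symm hvw
      (fun h => hux h.symm) hwv.symm hxu)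
  · exact hP4 (hasInduced_pathGraph_four hvx.symm hvu huw (fun h => hux h.symm) hvw hxw)

/-- Droms's key lemma: every nonempty finite simple graph with no induced `P₄` and no
induced `C₄` is either disconnected or has a central vertex (adjacent to all others). -/
theorem stmt16 {V : Type} [Fintype V] [Nonempty V] (A : SimpleGraph V)
    (hP4 : ¬ HasInduced (SimpleGraph.pathGraph 4) A)
    (hC4 : ¬ HasInduced (SimpleGraph.cycleGraph 4) A) :
    ¬ A.Connected ∨ ∃ v : V, ∀ w : V, w ≠ v → A.Adj v w :=
  stmt16_general A hP4 hC4
end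

section
/- Let A be a finite simple graph that is {P₄, C₄}-free (a Droms graph). Then A belongs to the smallest family of graphs D satisfying: (1) the empty graph is in D; (2) if A₁, A₂ ∈ D then their disjoint union A₁ ⊔ A₂ ∈ D; (3) if A ∈ D then the cone K₁ * A (adding one vertex adjacent to everything) is in D. Conversely, every graph in this family is {P₄, C₄}-free. -/
/-!
`P₄` and `C₄` are connected and have no universal vertex, so an induced copy of either in a
disjoint union lies in one part, and one in a cone avoids the apex; hence the family is
`{P₄, C₄}`-free. Conversely, let `A` be `{P₄, C₄}`-free. If `A` is disconnected it is the
disjoint union of a reachability class and its complement. If `A` is connected, a vertex `v` of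
maximal degree is universal: otherwise connectivity gives `v ~ w ~ u` with `u ≁ v`, and since
`N(w) \ N(v) ⊇ {u, v}` while `deg w ≤ deg v`, some `x ≠ w` has `x ~ v`, `x ≁ w`; then
`u, w, v, x` induce `P₄` or `C₄`. So `A` is a cone over `A - v`, and induction on the number of
vertices finishes the proof.
-/

/-- The disjoint union of two simple graphs (no edges between the parts). -/
def sumGraph {V₁ V₂ : Type} (A₁ : SimpleGraph V₁) (A₂ : SimpleGraph V₂) :
    SimpleGraph (V₁ ⊕ V₂) where
  Adj x y :=
    (∃ a b, x = Sum.inl a ∧ y = Sum.inl b ∧ A₁.Adj a b) ∨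
    (∃ a b, x = Sum.inr a ∧ y = Sum.inr b ∧ A₂.Adj a b)
  symm := by
    constructor
    rintro x y (⟨a, b, rfl, rfl, h⟩ | ⟨a, b, rfl, rfl, h⟩)
    · exact Or.inl ⟨b, a, rfl, rfl, h.symm⟩
    · exact Or.inr ⟨b, a, rfl, rfl, h.symm⟩
  loopless := by
    constructor
    rintro x (⟨a, b, rfl, h1, h⟩ | ⟨a, b, rfl, h1, h⟩)
    · obtain rfl : a = b := Sum.inl.inj h1
      exact A₁.irrefl h
    · obtain rfl : a = b := Sum.inr.inj h1
      exact A₂.irrefl h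

/-- The cone `K₁ * A`: one new vertex (`none`) joined to every vertex of `A`. -/
def coneGraph {V : Type} (A : SimpleGraph V) : SimpleGraph (Option V) where
  Adj x y :=
    (x = none ∧ y ≠ none) ∨ (x ≠ none ∧ y = none) ∨
    (∃ a b, x = some a ∧ y = some b ∧ A.Adj a b)
  symm := by
    constructor
    rintro x y (⟨rfl, h⟩ | ⟨h, rfl⟩ | ⟨a, b, rfl, rfl, h⟩)
    · exact Or.inr (Or.inl ⟨h, rfl⟩)
    · exact Or.inl ⟨rfl, h⟩
    · exact Or.inr (Or.inr ⟨b, a, rfl, rfl, h.symm⟩)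
  loopless := by
    constructor
    rintro x (⟨rfl, h⟩ | ⟨h, rfl⟩ | ⟨a, b, rfl, h1, h⟩)
    · exact h rfl
    · exact h rfl
    · obtain rfl : a = b := Option.some.inj h1
      exact A.irrefl h

/-- The smallest family of graphs (up to isomorphism) containing the empty graph and
closed under disjoint unions and cones. -/
inductive DromsFam : ∀ {V : Type}, SimpleGraph V → Prop
  | empty : DromsFam (⊥ : SimpleGraph Empty)
  | union {V₁ V₂ : Type} {A₁ : SimpleGraph V₁} {A₂ : SimpleGraph V₂} :
      DromsFam A₁ → DromsFam A₂ → DromsFam (sumGraph A₁ A₂)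
  | cone {V : Type} {A : SimpleGraph V} : DromsFam A → DromsFam (coneGraph A)
  | iso {V W : Type} {A : SimpleGraph V} {B : SimpleGraph W} :
      DromsFam A → Nonempty (A ≃g B) → DromsFam B

open SimpleGraph Finset

variable {U V W : Type}

lemma hasInduced_iff_isIndContained {B : SimpleGraph W} {A : SimpleGraph V} :
    HasInduced B A ↔ B ⊴ A :=
  ⟨fun ⟨f, hf, hadj⟩ => ⟨⟨⟨f, hf⟩, hadj _ _⟩⟩,
    fun ⟨f⟩ => ⟨f, f.injective, fun _ _ => f.map_adj_iff⟩⟩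

lemma sumGraph_eq_sum (A₁ : SimpleGraph V) (A₂ : SimpleGraph W) :
    sumGraph A₁ A₂ = A₁ ⊕g A₂ := by
  ext (a | a) (b | b) <;> simp [sumGraph]

def coneGraph.someEmbedding (A : SimpleGraph V) : A ↪g coneGraph A where
  toFun := some
  inj' := Option.some_injective V
  map_rel_iff' := by simp [coneGraph]

namespace SimpleGraph

lemma isIndContained_of_forall_mem_range {G : SimpleGraph V} {H : SimpleGraph W}
    {K : SimpleGraph U} (e : G ↪g K) (f : H ↪g K) (h : ∀ w, f w ∈ Set.range e) : H ⊴ G := by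
  choose g hg using h
  refine ⟨{ toFun := g, inj' := fun i j hij => f.injective ?_, map_rel_iff' := fun {i j} => ?_ }⟩
  · rw [← hg i, ← hg j, hij]
  · change G.Adj (g i) (g j) ↔ H.Adj i j
    rw [← e.map_adj_iff, hg, hg, f.map_adj_iff]

lemma Reachable.isLeft_eq_of_sum {G₁ : SimpleGraph V} {G₂ : SimpleGraph W} {x y : V ⊕ W}
    (h : (G₁ ⊕g G₂).Reachable x y) : x.isLeft = y.isLeft := by
  rcases x with a | a <;> rcases y with b | b
  · rfl
  · exact absurd h (not_reachable_sum_inl_inr a b)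
  · exact absurd h.symm (not_reachable_sum_inl_inr b a)
  · rfl

lemma IsIndContained.sum_of_connected {H : SimpleGraph U} {G₁ : SimpleGraph V}
    {G₂ : SimpleGraph W} (hH : H.Connected) (h : H ⊴ G₁ ⊕g G₂) : H ⊴ G₁ ∨ H ⊴ G₂ := by
  obtain ⟨f⟩ := h
  obtain ⟨w₀⟩ := hH.nonempty
  have hside (w : U) : (f w).isLeft = (f w₀).isLeft :=
    ((hH w w₀).map f.toHom).isLeft_eq_of_sum
  rcases hw₀ : f w₀ with a | a
  · refine .inl (isIndContained_of_forall_mem_range Embedding.sumInl f fun w => ?_)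
    obtain ⟨b, hb⟩ := Sum.isLeft_iff.mp (by simpa [hw₀] using hside w)
    exact ⟨b, hb.symm⟩
  · refine .inr (isIndContained_of_forall_mem_range Embedding.sumInr f fun w => ?_)
    obtain ⟨b, hb⟩ := Sum.isRight_iff.mp (by simpa [hw₀] using hside w)
    exact ⟨b, hb.symm⟩

lemma IsIndContained.of_coneGraph {H : SimpleGraph W} {A : SimpleGraph V}
    (hH : ∀ w, ¬ H.IsUniversal w) (h : H ⊴ coneGraph A) : H ⊴ A := by
  obtain ⟨f⟩ := h
  have hsome (w : W) : f w ≠ none := by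
    intro hw
    refine hH w fun w' hne => f.map_adj_iff.mp ?_
    rw [hw]
    exact .inl ⟨by rfl, fun h => hne (f.injective (hw.trans h.symm))⟩
  exact isIndContained_of_forall_mem_range (coneGraph.someEmbedding A) f fun w =>
    Option.ne_none_iff_exists.mp (hsome w)

lemma not_isUniversal_pathGraph_four (w : Fin 4) : ¬ (pathGraph 4).IsUniversal w := by
  revert w
  simp only [IsUniversal, pathGraph_adj]
  decide

lemma not_isUniversal_cycleGraph_four (w : Fin 4) : ¬ (cycleGraph 4).IsUniversal w := by
  revert w
  simp only [IsUniversal, cycleGraph_adj]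
  decide

lemma exists_adj_adj_not_adj_of_not_isUniversal {A : SimpleGraph V} (hA : A.Preconnected)
    {v : V} (hv : ¬ A.IsUniversal v) :
    ∃ w u, A.Adj v w ∧ A.Adj w u ∧ u ≠ v ∧ ¬ A.Adj v u := by
  obtain ⟨u₀, hvu₀, hu₀⟩ : ∃ u₀, v ≠ u₀ ∧ ¬ A.Adj v u₀ := by
    simpa [IsUniversal] using hv
  obtain ⟨p⟩ := hA v u₀
  obtain ⟨d, -, hd, hd'⟩ := p.exists_boundary_dart {x | x = v ∨ A.Adj v x} (.inl rfl)
    (by rintro (h | h); exacts [hvu₀ h.symm, hu₀ h])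
  simp only [Set.mem_ofPred_eq, not_or] at hd hd'
  rcases hd with hd | hd
  · exact absurd (hd ▸ d.adj) hd'.2
  · exact ⟨d.fst, d.snd, hd, d.adj, hd'.1, hd'.2⟩

lemma pathGraph_four_or_cycleGraph_four_isIndContained {A : SimpleGraph V} {u w v x : V}
    (huw : A.Adj u w) (hwv : A.Adj w v) (hvx : A.Adj v x) (huv : ¬ A.Adj u v)
    (hwx : ¬ A.Adj w x) (hne_uv : u ≠ v) (hne_wx : w ≠ x) :
    pathGraph 4 ⊴ A ∨ cycleGraph 4 ⊴ A := by
  have hne_ux : u ≠ x := fun h => hwx (h ▸ huw.symm)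
  have hinj : Function.Injective ![u, w, v, x] := by
    intro i j
    fin_cases i <;> fin_cases j <;>
      simp [huw.ne, hwv.ne, hvx.ne, hne_uv, hne_wx, hne_ux, huw.ne.symm, hwv.ne.symm,
        hvx.ne.symm, hne_uv.symm, hne_wx.symm, hne_ux.symm]
  by_cases hux : A.Adj u x
  · refine .inr ⟨⟨⟨_, hinj⟩, fun {i j} => ?_⟩⟩
    fin_cases i <;> fin_cases j <;>
      simp [cycleGraph_adj, huw, hwv, hvx, huv, hwx, hux, A.adj_comm] <;> decide
  · refine .inl ⟨⟨⟨_, hinj⟩, fun {i j} => ?_⟩⟩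
    fin_cases i <;> fin_cases j <;> simp [pathGraph_adj, huw, hwv, hvx, huv, hwx, hux, A.adj_comm]

lemma exists_isUniversal_of_connected [Finite V] {A : SimpleGraph V} (hA : A.Connected)
    (hP : ¬ pathGraph 4 ⊴ A) (hC : ¬ cycleGraph 4 ⊴ A) : ∃ v, A.IsUniversal v := by
  classical
  have := Fintype.ofFinite V
  obtain ⟨v, -, hmax⟩ := exists_max_image univ (fun a => A.degree a) ⟨hA.nonempty.some, mem_univ _⟩
  refine ⟨v, by_contra fun hv => ?_⟩
  obtain ⟨w, u, hvw, hwu, huv, hvu⟩ := exists_adj_adj_not_adj_of_not_isUniversal hA.preconnected hv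
  obtain ⟨x, hvx, hwx, hxw⟩ : ∃ x, A.Adj v x ∧ ¬ A.Adj w x ∧ x ≠ w := by
    have hcard_wv : #{u, v} ≤ #(A.neighborFinset w \ A.neighborFinset v) := by
      refine card_le_card fun y hy => ?_
      rcases mem_insert.mp hy with rfl | hy
      · simp [hwu, hvu]
      · simp [mem_singleton.mp hy, hvw.symm]
    have hcard_vw := card_sdiff_le_card_sdiff_iff.mpr (hmax w (mem_univ w))
    rw [card_pair huv] at hcard_wv
    have htwo : 1 < #(A.neighborFinset v \ A.neighborFinset w) := by omega
    obtain ⟨x, hx, hxw⟩ := exists_mem_ne htwo w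
    simp only [mem_sdiff, mem_neighborFinset] at hx
    exact ⟨x, hx.1, hx.2, hxw⟩
  exact (pathGraph_four_or_cycleGraph_four_isIndContained hwu.symm hvw.symm hvx
    (fun h => hvu h.symm) hwx huv hxw.symm).elim hP hC

end SimpleGraph

lemma DromsFam.not_isIndContained {H : SimpleGraph U} (hconn : H.Connected)
    (huniv : ∀ w, ¬ H.IsUniversal w) {A : SimpleGraph V} (hA : DromsFam A) : ¬ H ⊴ A := by
  induction hA with
  | empty => exact fun ⟨f⟩ => (f hconn.nonempty.some).elim
  | union _ _ ih₁ ih₂ =>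
    rw [sumGraph_eq_sum]
    exact fun h => (IsIndContained.sum_of_connected hconn h).elim ih₁ ih₂
  | cone _ ih => exact fun h => ih (IsIndContained.of_coneGraph huniv h)
  | iso _ e ih =>
    obtain ⟨e⟩ := e
    exact fun h => ih (h.trans e.symm.isIndContained)

lemma DromsFam.of_isEmpty [IsEmpty V] (A : SimpleGraph V) : DromsFam A :=
  .iso .empty ⟨⟨Equiv.equivOfIsEmpty Empty V, fun {a} => a.elim⟩⟩

lemma DromsFam.of_induce_of_induce_compl {A : SimpleGraph V} (S : Set V)
    (hS : ∀ a ∈ S, ∀ b ∉ S, ¬ A.Adj a b) (h₁ : DromsFam (A.induce S))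
    (h₂ : DromsFam (A.induce Sᶜ)) : DromsFam A := by
  classical
  refine .iso (.union h₁ h₂) ⟨⟨Equiv.Set.sumCompl S, fun {x y} => ?_⟩⟩
  rw [sumGraph_eq_sum]
  rcases x with a | a <;> rcases y with b | b
  · simp
  · simpa using hS _ a.2 _ b.2
  · simpa [A.adj_comm] using hS _ b.2 _ a.2
  · simp

lemma DromsFam.of_isUniversal {A : SimpleGraph V} {v : V} (hv : A.IsUniversal v)
    (h : DromsFam (A.induce {v}ᶜ)) : DromsFam A := by
  classical
  refine .iso (.cone h) ⟨⟨Equiv.optionSubtypeNe v, fun {x y} => ?_⟩⟩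
  rcases x with _ | a <;> rcases y with _ | b
  · simp [coneGraph]
  · exact iff_of_true (hv (Ne.symm b.2)) (.inl ⟨rfl, nofun⟩)
  · exact iff_of_true (hv (Ne.symm a.2)).symm (.inr (.inl ⟨nofun, rfl⟩))
  · exact ((coneGraph.someEmbedding (A.induce {v}ᶜ)).map_adj_iff (v := a) (w := b)).symm

theorem DromsFam.of_not_isIndContained [Finite V] (A : SimpleGraph V)
    (hP : ¬ pathGraph 4 ⊴ A) (hC : ¬ cycleGraph 4 ⊴ A) : DromsFam A := by
  induction h : Nat.card V using Nat.strong_induction_on generalizing V with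
  | _ n ih =>
  have ih_induce (S : Set V) (hS : ∃ x, x ∉ S) : DromsFam (A.induce S) := by
    obtain ⟨x, hx⟩ := hS
    have hsub := (Embedding.induce (G := A) S).isIndContained
    exact ih _ (h ▸ Finite.card_subtype_lt hx) _ (fun h' => hP (h'.trans hsub))
      (fun h' => hC (h'.trans hsub)) rfl
  rcases isEmpty_or_nonempty V with hV | hV
  · exact .of_isEmpty A
  by_cases hA : A.Connected
  · obtain ⟨v, hv⟩ := exists_isUniversal_of_connected hA hP hC
    exact .of_isUniversal hv (ih_induce _ ⟨v, by simp⟩)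
  · obtain ⟨u, y, huy⟩ : ∃ u y, ¬ A.Reachable u y := by
      simpa [connected_iff, Preconnected] using hA
    exact .of_induce_of_induce_compl {x | A.Reachable u x}
      (fun a ha b hb hab => hb (ha.trans hab.reachable)) (ih_induce _ ⟨y, huy⟩)
      (ih_induce _ ⟨u, by simp⟩)

/-- A finite simple graph is `{P₄, C₄}`-free (a Droms graph) if and only if it belongs
to the smallest family of graphs containing the empty graph and closed under disjoint
unions and cones. -/
theorem stmt17 {V : Type} [Fintype V] (A : SimpleGraph V) :
    (¬ HasInduced (SimpleGraph.pathGraph 4) A ∧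
      ¬ HasInduced (SimpleGraph.cycleGraph 4) A) ↔ DromsFam A := by
  simp only [hasInduced_iff_isIndContained]
  refine ⟨fun ⟨hP, hC⟩ => .of_not_isIndContained A hP hC, fun hA => ⟨?_, ?_⟩⟩
  · exact hA.not_isIndContained (pathGraph_connected 3) not_isUniversal_pathGraph_four
  · exact hA.not_isIndContained cycleGraph_connected not_isUniversal_cycleGraph_four
end
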